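/- The erasure of an MLL_J proof is an MLL proof with an order-preserving embedding of rules: for every MLL_J proof π of ⊢ Γ, Θ_J with Γ nonempty, the erased proof |π|_J is a valid MLL proof of ⊢ |Γ|_J, and there is an injective map from the rule occurrences of |π|_J to those of π preserving the kind of each rule and the 'above' (ancestor) ordering between rules. -/

import Mathlib

inductive MLL where
  | atom : ℕ → MLL
  | natom : ℕ → MLL
  | tensor : MLL → MLL → MLL
  | parr : MLL → MLL → MLL
deriving DecidableEq

/-- `F` is a J-formula: the jump atom `j` or its negation. -/
def MLL.isJF (j : ℕ) : MLL → Prop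
  | .atom a => a = j
  | .natom a => a = j
  | _ => False

/-- MLL_J formulas: F_J = A | F_J ⅋ F_J | F_J ⊗ F_J | F_J ⅋ J^⊥ | F_J ⊗ J,
where A ranges over (possibly negated) atoms distinct from the jump atom `j`. -/
inductive MLL.IsMLLJ (j : ℕ) : MLL → Prop
  | atom : ∀ a, a ≠ j → MLL.IsMLLJ j (.atom a)
  | natom : ∀ a, a ≠ j → MLL.IsMLLJ j (.natom a)
  | parr : ∀ F G, MLL.IsMLLJ j F → MLL.IsMLLJ j G → MLL.IsMLLJ j (.parr F G)
  | tensor : ∀ F G, MLL.IsMLLJ j F → MLL.IsMLLJ j G → MLL.IsMLLJ j (.tensor F G)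
  | parrJ : ∀ F, MLL.IsMLLJ j F → MLL.IsMLLJ j (.parr F (.natom j))
  | tensorJ : ∀ F, MLL.IsMLLJ j F → MLL.IsMLLJ j (.tensor F (.atom j))

/-- Erasure of the jump atom `j` in a formula. -/
def MLL.erase (j : ℕ) : MLL → MLL
  | .tensor F G =>
      if G = .atom j ∨ G = .natom j then MLL.erase j F
      else .tensor (MLL.erase j F) (MLL.erase j G)
  | .parr F G =>
      if G = .atom j ∨ G = .natom j then MLL.erase j F
      else .parr (MLL.erase j F) (MLL.erase j G)
  | F => F

/-- `F` contains an occurrence of the atom `j` (as `J` or `J^⊥`). -/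
def MLL.containsJ (j : ℕ) : MLL → Prop
  | .atom a => a = j
  | .natom a => a = j
  | .tensor F G => MLL.containsJ j F ∨ MLL.containsJ j G
  | .parr F G => MLL.containsJ j F ∨ MLL.containsJ j G

/-- Proof trees for MLL_J: each node records the rule applied and its active
formulas. `tensorJ F` is the ⊗_J rule (tensoring `F` with `J` via the J-axiom
⊢ J, J^⊥), `parrJ F` is the ⅋_{J^⊥} rule forming `F ⅋ J^⊥`. -/
inductive PT where
  | ax : ℕ → PT
  | parr : MLL → MLL → PT → PT
  | tensor : MLL → MLL → PT → PT → PT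
  | tensorJ : MLL → PT → PT
  | parrJ : MLL → PT → PT
deriving DecidableEq

/-- Validity of a proof tree for a sequent, in MLL_J (exchange is implicit). -/
inductive ValidJ (j : ℕ) : PT → List MLL → Prop
  | exch : ∀ t Γ Δ, Γ.Perm Δ → ValidJ j t Γ → ValidJ j t Δ
  | ax : ∀ a, a ≠ j → ValidJ j (.ax a) [.atom a, .natom a]
  | parr : ∀ t Γ F G, ¬ MLL.isJF j F → ¬ MLL.isJF j G →
      ValidJ j t (F :: G :: Γ) → ValidJ j (.parr F G t) (.parr F G :: Γ)
  | tensor : ∀ t u Γ Δ F G, ¬ MLL.isJF j F → ¬ MLL.isJF j G →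
      ValidJ j t (F :: Γ) → ValidJ j u (G :: Δ) →
      ValidJ j (.tensor F G t u) (.tensor F G :: (Γ ++ Δ))
  | tensorJ : ∀ t Γ F, ¬ MLL.isJF j F → ValidJ j t (F :: Γ) →
      ValidJ j (.tensorJ F t) (.tensor F (.atom j) :: .natom j :: Γ)
  | parrJ : ∀ t Γ F, ¬ MLL.isJF j F → ValidJ j t (F :: .natom j :: Γ) →
      ValidJ j (.parrJ F t) (.parr F (.natom j) :: Γ)

/-- Validity of a proof tree for a sequent, in plain MLL (over non-J atoms). -/
inductive ValidM (j : ℕ) : PT → List MLL → Prop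
  | exch : ∀ t Γ Δ, Γ.Perm Δ → ValidM j t Γ → ValidM j t Δ
  | ax : ∀ a, a ≠ j → ValidM j (.ax a) [.atom a, .natom a]
  | parr : ∀ t Γ F G, ValidM j t (F :: G :: Γ) → ValidM j (.parr F G t) (.parr F G :: Γ)
  | tensor : ∀ t u Γ Δ F G, ValidM j t (F :: Γ) → ValidM j u (G :: Δ) →
      ValidM j (.tensor F G t u) (.tensor F G :: (Γ ++ Δ))

/-- Erasure of an MLL_J proof: ⊗_J and ⅋_{J^⊥} rules are deleted, the other
rules have their active formulas erased. -/
def PT.eraseT (j : ℕ) : PT → PT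
  | .ax a => .ax a
  | .parr F G t => .parr (MLL.erase j F) (MLL.erase j G) (t.eraseT j)
  | .tensor F G t u => .tensor (MLL.erase j F) (MLL.erase j G) (t.eraseT j) (u.eraseT j)
  | .tensorJ _ t => t.eraseT j
  | .parrJ _ t => t.eraseT j

/-- The kind of an inference rule. -/
inductive Kind where
  | axK | parrK | tensorK | tensorJK | parrJK
deriving DecidableEq

def PT.kindOf : PT → Kind
  | .ax _ => .axK
  | .parr _ _ _ => .parrK
  | .tensor _ _ _ _ => .tensorK
  | .tensorJ _ _ => .tensorJK
  | .parrJ _ _ => .parrJK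

/-- The subtree of a proof tree at a given position (path from the root). -/
def PT.subtreeAt : PT → List ℕ → Option PT
  | t, [] => some t
  | .parr _ _ t, 0 :: p => t.subtreeAt p
  | .tensor _ _ t _, 0 :: p => t.subtreeAt p
  | .tensor _ _ _ u, 1 :: p => u.subtreeAt p
  | .tensorJ _ t, 0 :: p => t.subtreeAt p
  | .parrJ _ t, 0 :: p => t.subtreeAt p
  | _, _ => none

/-- The kind of the rule occurrence at a given position, if any. -/
def PT.kindAt (t : PT) (p : List ℕ) : Option Kind :=
  (t.subtreeAt p).map PT.kindOf

/-- Rule occurrence `p` is above rule occurrence `q` if `q` lies on the path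
from the root to `p`, i.e. `q` is a proper prefix of `p`. -/
def Above (p q : List ℕ) : Prop := q <+: p ∧ q ≠ p

section Aux

lemma MLL.ne_of_not_isJF {j : ℕ} {F : MLL} (h : ¬ MLL.isJF j F) :
    F ≠ MLL.atom j ∧ F ≠ MLL.natom j := by
  constructor <;> rintro rfl <;> exact h rfl

lemma opt_map_isSome {α β} (f : α → β) (o : Option α) :
    (o.map f).isSome = o.isSome := by cases o <;> rfl

def keepB (j : ℕ) (F : MLL) : Bool := F ≠ MLL.natom j

lemma validM_erase (j : ℕ) {t : PT} {Δ : List MLL} (h : ValidJ j t Δ) :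
    ValidM j (t.eraseT j) ((Δ.filter (keepB j)).map (MLL.erase j)) := by
  induction h with
  | exch t Γ Δ hperm _ ih => exact .exch _ _ _ (((hperm.filter _)).map _) ih
  | ax a ha =>
      have : keepB j (MLL.natom a) = true := by simp [keepB, ha]
      simp [PT.eraseT, keepB, MLL.erase, ha]
      exact ValidM.ax a ha
  | parr t Γ F G hF hG _ ih =>
      obtain ⟨hF1, hF2⟩ := MLL.ne_of_not_isJF hF
      obtain ⟨hG1, hG2⟩ := MLL.ne_of_not_isJF hG
      have hkF : keepB j F = true := by simp [keepB, hF2]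
      have hkG : keepB j G = true := by simp [keepB, hG2]
      have he : MLL.erase j (MLL.parr F G) = MLL.parr (MLL.erase j F) (MLL.erase j G) := by
        simp [MLL.erase, hG1, hG2]
      simp only [List.filter_cons, hkF, hkG, if_true, List.map_cons] at ih
      simp only [PT.eraseT, List.filter_cons, keepB, List.map_cons]
      simp only [show (decide (MLL.parr F G ≠ MLL.natom j)) = true by simp, if_true,
        List.map_cons, he]
      exact ValidM.parr _ _ _ _ ih
  | tensor t u Γ Δ F G hF hG _ _ ih1 ih2 =>
      obtain ⟨hF1, hF2⟩ := MLL.ne_of_not_isJF hF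
      obtain ⟨hG1, hG2⟩ := MLL.ne_of_not_isJF hG
      have hkF : keepB j F = true := by simp [keepB, hF2]
      have hkG : keepB j G = true := by simp [keepB, hG2]
      have he : MLL.erase j (MLL.tensor F G) = MLL.tensor (MLL.erase j F) (MLL.erase j G) := by
        simp [MLL.erase, hG1, hG2]
      simp only [List.filter_cons, hkF, hkG, if_true, List.map_cons] at ih1 ih2
      simp only [PT.eraseT, List.filter_cons, List.filter_append, List.map_append, keepB,
        List.map_cons]
      simp only [show (decide (MLL.tensor F G ≠ MLL.natom j)) = true by simp, if_true,
        List.map_cons, List.map_append, he]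
      exact ValidM.tensor _ _ _ _ _ _ ih1 ih2
  | tensorJ t Γ F hF _ ih =>
      obtain ⟨hF1, hF2⟩ := MLL.ne_of_not_isJF hF
      have hkF : keepB j F = true := by simp [keepB, hF2]
      have he : MLL.erase j (MLL.tensor F (MLL.atom j)) = MLL.erase j F := by
        simp [MLL.erase]
      simp only [List.filter_cons, hkF, if_true, List.map_cons] at ih
      simp only [PT.eraseT, List.filter_cons, keepB, List.map_cons]
      simp only [show (decide (MLL.tensor F (MLL.atom j) ≠ MLL.natom j)) = true by simp,
        show (decide (MLL.natom j ≠ MLL.natom j)) = false by simp, if_true,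
        Bool.false_eq_true, if_false, List.map_cons, he]
      exact ih
  | parrJ t Γ F hF _ ih =>
      obtain ⟨hF1, hF2⟩ := MLL.ne_of_not_isJF hF
      have hkF : keepB j F = true := by simp [keepB, hF2]
      have he : MLL.erase j (MLL.parr F (MLL.natom j)) = MLL.erase j F := by
        simp [MLL.erase]
      simp only [List.filter_cons, hkF, if_true, List.map_cons,
        show (decide (MLL.natom j ≠ MLL.natom j)) = false by simp, if_false] at ih
      simp only [PT.eraseT, List.filter_cons, keepB, List.map_cons]
      simp only [show (decide (MLL.parr F (MLL.natom j) ≠ MLL.natom j)) = true by simp,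
        if_true, List.map_cons, he]
      simp only [show (keepB j (MLL.natom j)) = false by simp [keepB], Bool.false_eq_true,
        if_false] at ih
      exact ih

def embedP : PT → List ℕ → List ℕ
  | .ax _, p => p
  | .parr _ _ t, p =>
      match p with
      | [] => []
      | 0 :: p => 0 :: embedP t p
      | p => p
  | .tensor _ _ t u, p =>
      match p with
      | [] => []
      | 0 :: p => 0 :: embedP t p
      | 1 :: p => 1 :: embedP u p
      | p => p
  | .tensorJ _ t, p => 0 :: embedP t p
  | .parrJ _ t, p => 0 :: embedP t p

lemma embed_sub (j : ℕ) : ∀ (t : PT) (p : List ℕ) (s : PT),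
    (t.eraseT j).subtreeAt p = some s →
    ∃ s', t.subtreeAt (embedP t p) = some s' ∧ s'.kindOf = s.kindOf := by
  intro t
  induction t with
  | ax a =>
      rintro (_ | ⟨n, p⟩) s hs
      · cases hs; exact ⟨_, rfl, rfl⟩
      · simp [PT.eraseT, PT.subtreeAt] at hs
  | parr F G t ih =>
      rintro (_ | ⟨(_ | n), p⟩) s hs
      · cases hs; exact ⟨.parr F G t, rfl, rfl⟩
      · simp only [PT.eraseT, PT.subtreeAt] at hs
        obtain ⟨s', h1, h2⟩ := ih p s hs
        exact ⟨s', by simpa [embedP, PT.subtreeAt] using h1, h2⟩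
      · simp [PT.eraseT, PT.subtreeAt] at hs
  | tensor F G t u iht ihu =>
      rintro (_ | ⟨(_ | _ | n), p⟩) s hs
      · cases hs; exact ⟨.tensor F G t u, rfl, rfl⟩
      · simp only [PT.eraseT, PT.subtreeAt] at hs
        obtain ⟨s', h1, h2⟩ := iht p s hs
        exact ⟨s', by simpa [embedP, PT.subtreeAt] using h1, h2⟩
      · simp only [PT.eraseT, PT.subtreeAt] at hs
        obtain ⟨s', h1, h2⟩ := ihu p s hs
        exact ⟨s', by simpa [embedP, PT.subtreeAt] using h1, h2⟩
      · simp [PT.eraseT, PT.subtreeAt] at hs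
  | tensorJ F t ih =>
      intro p s hs
      simp only [PT.eraseT] at hs
      obtain ⟨s', h1, h2⟩ := ih p s hs
      exact ⟨s', by simpa [embedP, PT.subtreeAt] using h1, h2⟩
  | parrJ F t ih =>
      intro p s hs
      simp only [PT.eraseT] at hs
      obtain ⟨s', h1, h2⟩ := ih p s hs
      exact ⟨s', by simpa [embedP, PT.subtreeAt] using h1, h2⟩

set_option maxHeartbeats 1000000 in
lemma embed_inj (j : ℕ) : ∀ (t : PT) (p q : List ℕ),
    ((t.eraseT j).subtreeAt p).isSome → ((t.eraseT j).subtreeAt q).isSome →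
    embedP t p = embedP t q → p = q := by
  intro t
  induction t with
  | ax a =>
      rintro (_ | ⟨n, p⟩) (_ | ⟨m, q⟩) hp hq h <;>
        simp_all [PT.eraseT, PT.subtreeAt]
  | parr F G t ih =>
      rintro (_ | ⟨(_ | n), p⟩) (_ | ⟨(_ | m), q⟩) hp hq h <;>
        simp_all [PT.eraseT, PT.subtreeAt, embedP]
      exact ih p q hp hq h
  | tensor F G t u iht ihu =>
      rintro (_ | ⟨(_ | _ | n), p⟩) (_ | ⟨(_ | _ | m), q⟩) hp hq h <;>
        simp_all [PT.eraseT, PT.subtreeAt, embedP]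
      · exact iht p q hp hq h
      · exact ihu p q hp hq h
  | tensorJ F t ih =>
      intro p q hp hq h
      simp only [PT.eraseT] at hp hq
      simp only [embedP, List.cons.injEq, true_and] at h
      exact ih p q hp hq h
  | parrJ F t ih =>
      intro p q hp hq h
      simp only [PT.eraseT] at hp hq
      simp only [embedP, List.cons.injEq, true_and] at h
      exact ih p q hp hq h

lemma embed_prefix (j : ℕ) : ∀ (t : PT) (p q : List ℕ),
    ((t.eraseT j).subtreeAt p).isSome → ((t.eraseT j).subtreeAt q).isSome →
    q <+: p → q ≠ p → embedP t q <+: embedP t p ∧ embedP t q ≠ embedP t p := by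
  intro t
  induction t with
  | ax a =>
      rintro (_ | ⟨n, p⟩) (_ | ⟨m, q⟩) hp hq hpre hne <;>
        simp_all [PT.eraseT, PT.subtreeAt]
  | parr F G t ih =>
      rintro (_ | ⟨(_ | n), p⟩) (_ | ⟨(_ | m), q⟩) hp hq hpre hne <;>
        simp_all [PT.eraseT, PT.subtreeAt, embedP, List.cons_prefix_cons]
  | tensor F G t u iht ihu =>
      rintro (_ | ⟨(_ | _ | n), p⟩) (_ | ⟨(_ | _ | m), q⟩) hp hq hpre hne <;>
        simp_all [PT.eraseT, PT.subtreeAt, embedP, List.cons_prefix_cons]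
  | tensorJ F t ih =>
      intro p q hp hq hpre hne
      simp only [PT.eraseT] at hp hq
      have := ih p q hp hq hpre hne
      simp only [embedP, List.cons_prefix_cons, true_and, ne_eq, List.cons.injEq]
      exact this
  | parrJ F t ih =>
      intro p q hp hq hpre hne
      simp only [PT.eraseT] at hp hq
      have := ih p q hp hq hpre hne
      simp only [embedP, List.cons_prefix_cons, true_and, ne_eq, List.cons.injEq]
      exact this

end Aux

/-- The erasure of an MLL_J proof is a valid MLL proof of the erased sequent,
and its rule occurrences embed injectively into those of the original proof,
preserving the kind of each rule and the `above` ordering between rules. -/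
theorem eraseT_valid_and_embeds (j : ℕ) (t : PT) (Γ Θ : List MLL)
    (h : ValidJ j t (Γ ++ Θ))
    (hΘ : ∀ F ∈ Θ, F = MLL.natom j)
    (hΓJ : ∀ F ∈ Γ, ¬ MLL.isJF j F)
    (hne : Γ ≠ []) :
    ValidM j (t.eraseT j) (Γ.map (MLL.erase j)) ∧
    ∃ f : List ℕ → List ℕ,
      (∀ p, ((t.eraseT j).kindAt p).isSome → PT.kindAt t (f p) = (t.eraseT j).kindAt p) ∧
      (∀ p q, ((t.eraseT j).kindAt p).isSome → ((t.eraseT j).kindAt q).isSome →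
        f p = f q → p = q) ∧
      (∀ p q, ((t.eraseT j).kindAt p).isSome → ((t.eraseT j).kindAt q).isSome →
        Above p q → Above (f p) (f q)) := by

  constructor
  · have := validM_erase j h
    have hfil : ((Γ ++ Θ).filter (keepB j)) = Γ := by
      rw [List.filter_append]
      have h1 : Γ.filter (keepB j) = Γ := by
        apply List.filter_eq_self.2
        intro F hF
        simp [keepB, (MLL.ne_of_not_isJF (hΓJ F hF)).2]
      have h2 : Θ.filter (keepB j) = [] := by
        apply List.filter_eq_nil_iff.2
        intro F hF
        simp [keepB, hΘ F hF]
      rw [h1, h2, List.append_nil]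
    rwa [hfil] at this
  · refine ⟨embedP t, ?_, ?_, ?_⟩
    · intro p hp
      rw [PT.kindAt, opt_map_isSome] at hp
      obtain ⟨s, hs⟩ := Option.isSome_iff_exists.1 hp
      obtain ⟨s', h1, h2⟩ := embed_sub j t p s hs
      rw [PT.kindAt, PT.kindAt, h1, hs, Option.map_some, Option.map_some, h2]
    · intro p q hp hq
      simp only [PT.kindAt, opt_map_isSome] at hp hq
      exact embed_inj j t p q hp hq
    · intro p q hp hq hab
      simp only [PT.kindAt, opt_map_isSome] at hp hq
      exact (embed_prefix j t p q hp hq hab.1 hab.2)
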